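/- Let n ≥ 3 be an integer and let z ∈ C²(ℝ) solve the Emden-type ODE z̈(t) + (n−4+2z(t))·ż(t) − 2(n−2)·(z(t)−z(t)²) = 0 for all t ∈ ℝ, with z(t) > 0 for every t ∈ ℝ, lim_{t→−∞} z(t) = 0, lim_{t→−∞} ż(t) = 0 and lim_{t→−∞} ż(t)/z(t) = 2. If t₀ ∈ ℝ is such that 0 < z(t) ≤ 1 for every t ∈ (−∞, t₀), then ż(t) > 0 for every t ∈ (−∞, t₀]. -/

import Mathlib

open Set Filter
open scoped Topology

noncomputable section

/-- The Emden-type ODE `z̈ + (n−4+2z)·ż − 2(n−2)·(z−z²) = 0` on all of `ℝ`. -/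
def EmdenODE (n : ℕ) (z : ℝ → ℝ) : Prop :=
  ∀ t : ℝ, deriv (deriv z) t + ((n : ℝ) - 4 + 2 * z t) * deriv z t
    - 2 * ((n : ℝ) - 2) * (z t - (z t) ^ 2) = 0

set_option maxHeartbeats 1600000 in
theorem stmt12 (n : ℕ) (hn : 3 ≤ n) (z : ℝ → ℝ) (hz : ContDiff ℝ 2 z)
    (hode : EmdenODE n z) (hpos : ∀ t : ℝ, 0 < z t)
    (h1 : Tendsto z atBot (nhds 0))
    (h2 : Tendsto (deriv z) atBot (nhds 0))
    (h3 : Tendsto (fun t => deriv z t / z t) atBot (nhds 2))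
    (t₀ : ℝ) (hle : ∀ t : ℝ, t < t₀ → z t ≤ 1) :
    ∀ t : ℝ, t ≤ t₀ → 0 < deriv z t := by
  have hn3 : (3 : ℝ) ≤ (n : ℝ) := by exact_mod_cast hn
  have hz1 : Differentiable ℝ z := hz.differentiable (by norm_num)
  have hz2 : Differentiable ℝ (deriv z) := by
    have h : ContDiff ℝ (1+1) z := by norm_num; exact hz
    exact ((contDiff_succ_iff_deriv.mp h).2.2).differentiable (by norm_num)
  have hode' : ∀ t : ℝ, deriv (deriv z) t
      = 2 * ((n : ℝ) - 2) * (z t - (z t) ^ 2) - ((n : ℝ) - 4 + 2 * z t) * deriv z t := by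
    intro t; have := hode t; linarith
  -- Step 1: z' > 0 near -∞
  have hev : ∀ᶠ t in atBot, 1 < deriv z t / z t :=
    h3.eventually (lt_mem_nhds (by norm_num : (1:ℝ) < 2))
  obtain ⟨a, ha⟩ := eventually_atBot.mp hev
  have hapos : ∀ t ≤ a, 0 < deriv z t := by
    intro t ht
    have h0 : 0 < deriv z t / z t := lt_trans zero_lt_one (ha t ht)
    rcases div_pos_iff.mp h0 with ⟨h, _⟩ | ⟨_, h⟩
    · exact h
    · exact absurd (hpos t) (by linarith)
  -- Step 2: contradiction argument
  by_contra hcon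
  push_neg at hcon
  obtain ⟨s₀, hs₀, hs₀'⟩ := hcon
  set S : Set ℝ := {t | t ≤ t₀ ∧ deriv z t ≤ 0} with hS
  have hSne : S.Nonempty := ⟨s₀, hs₀, hs₀'⟩
  have hSbdd : BddBelow S := by
    refine ⟨a, fun s hs => ?_⟩
    by_contra hsa
    push_neg at hsa
    exact absurd (hapos s hsa.le) (by linarith [hs.2])
  have hScl : IsClosed S := by
    have hSeq : S = Iic t₀ ∩ (deriv z) ⁻¹' (Iic 0) := rfl
    rw [hSeq]
    exact isClosed_Iic.inter (isClosed_Iic.preimage hz2.continuous)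
  set t₁ := sInf S with ht₁def
  have ht₁S : t₁ ∈ S := hScl.csInf_mem hSne hSbdd
  have ht₁t₀ : t₁ ≤ t₀ := ht₁S.1
  have hlt : ∀ t, t < t₁ → 0 < deriv z t := by
    intro t ht
    by_contra h
    push_neg at h
    have : t ∈ S := ⟨le_of_lt (lt_of_lt_of_le ht ht₁t₀), h⟩
    exact absurd (csInf_le hSbdd this) (not_le.mpr ht)
  have hz'0 : deriv z t₁ = 0 := by
    refine le_antisymm ht₁S.2 ?_
    have htd : Tendsto (deriv z) (𝓝[<] t₁) (𝓝 (deriv z t₁)) :=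
      (hz2.continuous.tendsto t₁).mono_left nhdsWithin_le_nhds
    refine ge_of_tendsto htd ?_
    filter_upwards [self_mem_nhdsWithin] with t ht
    exact (hlt t ht).le
  have hmono : StrictMonoOn z (Iic t₁) := by
    refine strictMonoOn_of_deriv_pos (convex_Iic t₁) hz1.continuous.continuousOn ?_
    intro x hx
    rw [interior_Iic] at hx
    exact hlt x hx
  have hzt₁le : z t₁ ≤ 1 := by
    have htd : Tendsto z (𝓝[<] t₁) (𝓝 (z t₁)) :=
      (hz1.continuous.tendsto t₁).mono_left nhdsWithin_le_nhds
    refine le_of_tendsto htd ?_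
    filter_upwards [self_mem_nhdsWithin] with t ht
    exact hle t (lt_of_lt_of_le ht ht₁t₀)
  rcases lt_or_eq_of_le hzt₁le with hB | hB
  · -- Case z t₁ < 1 : z'' t₁ > 0, so z' < 0 just before t₁, contradiction
    have hd : 0 < deriv (deriv z) t₁ := by
      rw [hode' t₁, hz'0]
      have h0 : 0 < z t₁ := hpos t₁
      nlinarith [mul_pos h0 (by linarith : (0:ℝ) < 1 - z t₁)]
    have hD : HasDerivAt (deriv z) (deriv (deriv z) t₁) t₁ := (hz2 t₁).hasDerivAt
    have hslope : ∀ᶠ t in 𝓝[<] t₁, 0 < slope (deriv z) t₁ t := by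
      have h := (hasDerivAt_iff_tendsto_slope.mp hD).eventually (lt_mem_nhds hd)
      exact h.filter_mono (nhdsWithin_mono t₁ (fun x hx => ne_of_lt hx))
    obtain ⟨t, hts, htmem⟩ := (hslope.and self_mem_nhdsWithin).exists
    have ht : t < t₁ := htmem
    rw [slope_def_field, hz'0] at hts
    have hq : 0 < deriv z t / (t - t₁) := by
      simpa [div_eq_iff, sub_ne_zero] using hts
    have h2' : t - t₁ < 0 := by linarith
    have h3' : deriv z t < 0 := by
      by_contra h
      push_neg at h
      have := div_nonpos_of_nonneg_of_nonpos h h2'.le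
      linarith
    exact absurd (hlt t ht) (by linarith)
  · -- Case z t₁ = 1 : backward uniqueness via Grönwall
    set f : ℝ → ℝ × ℝ := fun s => (1 - z (t₁ - s), -(deriv z (t₁ - s))) with hf
    set F : ℝ → ℝ × ℝ := fun s => (deriv z (t₁ - s), deriv (deriv z) (t₁ - s)) with hFdef
    have hFd : ∀ s : ℝ, HasDerivAt f (F s) s := by
      intro s
      have hsub : HasDerivAt (fun x : ℝ => t₁ - x) (-1) s := (hasDerivAt_id s).const_sub t₁
      have g1 : HasDerivAt (fun x => z (t₁ - x)) (deriv z (t₁ - s) * (-1)) s :=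
        (hz1 (t₁ - s)).hasDerivAt.comp s hsub
      have g2 : HasDerivAt (fun x => deriv z (t₁ - x)) (deriv (deriv z) (t₁ - s) * (-1)) s :=
        (hz2 (t₁ - s)).hasDerivAt.comp s hsub
      have g1' : HasDerivAt (fun x => 1 - z (t₁ - x)) (deriv z (t₁ - s)) s := by
        simpa using g1.const_sub 1
      have g2' : HasDerivAt (fun x => -(deriv z (t₁ - x))) (deriv (deriv z) (t₁ - s)) s := by
        have g2n := g2.neg
        rw [mul_neg_one, neg_neg] at g2n
        exact g2n
      exact g1'.prodMk g2'
    have hfc : ContinuousOn f (Icc (0:ℝ) 1) := by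
      apply Continuous.continuousOn
      exact ((continuous_const.sub (hz1.continuous.comp (continuous_const.sub continuous_id))).prodMk
        ((hz2.continuous.comp (continuous_const.sub continuous_id)).neg))
    have hf0 : ‖f 0‖ ≤ 0 := by
      simp [hf, hz'0, ← hB]
    have hbound : ∀ s ∈ Ico (0:ℝ) 1, ‖F s‖ ≤ (3 * (n:ℝ)) * ‖f s‖ + 0 := by
      intro s hs
      set τ := t₁ - s with hτ
      have hτle : τ ≤ t₁ := by simp [hτ]; exact hs.1
      have hzτ1 : z τ ≤ 1 := by
        rw [← hB]
        exact hmono.monotoneOn (mem_Iic.mpr hτle) (mem_Iic.mpr le_rfl) hτle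
      have hzτ0 : 0 < z τ := hpos τ
      have hA : ‖f s‖ = max |1 - z τ| |deriv z τ| := by
        simp [hf, Prod.norm_def, Real.norm_eq_abs, hτ]
      have hF : ‖F s‖ = max |deriv z τ| |deriv (deriv z) τ| := by
        simp [hFdef, Prod.norm_def, Real.norm_eq_abs, hτ]
      rw [hA, hF, add_zero]
      set A := |1 - z τ| with hAd
      set B := |deriv z τ| with hBd
      have hA0 : 0 ≤ A := abs_nonneg _
      have hB0 : 0 ≤ B := abs_nonneg _
      have hAle : A ≤ max A B := le_max_left _ _
      have hBle : B ≤ max A B := le_max_right _ _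
      have hmax0 : (0:ℝ) ≤ max A B := le_trans hA0 hAle
      have h1z : (0:ℝ) ≤ 1 - z τ := by linarith
      have hAeq : A = 1 - z τ := abs_of_nonneg h1z
      have e1 : |2 * ((n:ℝ) - 2) * (z τ - z τ ^ 2)| ≤ 2 * (n:ℝ) * A := by
        have hpnn : (0:ℝ) ≤ 2 * ((n:ℝ) - 2) * (z τ - z τ ^ 2) := by
          have := mul_nonneg (by linarith : (0:ℝ) ≤ 2 * ((n:ℝ) - 2)) (mul_nonneg hzτ0.le h1z)
          nlinarith
        rw [abs_of_nonneg hpnn, hAeq]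
        nlinarith [mul_nonneg h1z h1z, mul_nonneg hzτ0.le h1z]
      have e2 : |((n:ℝ) - 4 + 2 * z τ) * deriv z τ| ≤ (n:ℝ) * B := by
        rw [abs_mul]
        have h2' : |(n:ℝ) - 4 + 2 * z τ| ≤ (n:ℝ) := by
          rw [abs_le]; constructor <;> nlinarith
        exact mul_le_mul_of_nonneg_right h2' hB0
      have key : |deriv (deriv z) τ| ≤ 2 * (n:ℝ) * A + (n:ℝ) * B := by
        rw [hode' τ]
        exact (abs_sub _ _).trans (add_le_add e1 e2)
      apply max_le
      · have h13 : (1:ℝ) ≤ 3 * (n:ℝ) := by linarith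
        have := mul_le_mul_of_nonneg_right h13 hmax0
        linarith [hBle]
      · have m1 : 2 * (n:ℝ) * A ≤ 2 * (n:ℝ) * max A B :=
          mul_le_mul_of_nonneg_left hAle (by linarith)
        have m2 : (n:ℝ) * B ≤ (n:ℝ) * max A B :=
          mul_le_mul_of_nonneg_left hBle (by linarith)
        have hsum : 2 * (n:ℝ) * max A B + (n:ℝ) * max A B = 3 * (n:ℝ) * max A B := by ring
        linarith [key]
    have hgron := norm_le_gronwallBound_of_norm_deriv_right_le hfc
      (fun s hs => (hFd s).hasDerivWithinAt) hf0 hbound 1 ⟨zero_le_one, le_refl 1⟩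
    rw [gronwallBound_ε0_δ0] at hgron
    have h1' : |1 - z (t₁ - 1)| ≤ 0 := by
      have hfst : ‖(f 1).1‖ ≤ ‖f 1‖ := norm_fst_le (f 1)
      have hle0 : ‖(f 1).1‖ ≤ 0 := le_trans hfst hgron
      simpa [hf, Real.norm_eq_abs] using hle0
    have hz11 : z (t₁ - 1) = 1 := by
      have h2' := abs_nonneg (1 - z (t₁ - 1))
      have heq := abs_eq_zero.mp (le_antisymm h1' h2')
      linarith
    have hfin : z (t₁ - 1) < z t₁ :=
      hmono (mem_Iic.mpr (by linarith)) (mem_Iic.mpr le_rfl) (by linarith)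
    rw [hz11, hB] at hfin
    exact lt_irrefl _ hfin

end
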